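/- arXiv:1904.04451 — 2 statements merged into one kernel-verified Lean document; each statement's English description precedes it below -/
import Mathlib

section
/- Let t ∈ ℂ be transcendental over ℚ and a ∈ ℂ with a ≠ 0. Then the additive subgroup of (ℂ, +) generated by the set {t^(-2n) · a : n ∈ ℕ} is not finitely generated. -/
/-!
The powers of a transcendental number are linearly independent over `ℚ`, and so are the
elements `(t⁻¹ ^ 2) ^ n * a = t ^ (-2n) * a`, since `t⁻¹ ^ 2` is again transcendental. A finitely
generated subgroup lies in the `ℚ`-span of finitely many vectors, which cannot contain an
infinite linearly independent family.
-/

open Polynomial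

theorem Transcendental.linearIndependent_pow {R A : Type*} [CommRing R] [Ring A] [Algebra R A]
    {x : A} (hx : Transcendental R x) : LinearIndependent R (x ^ · : ℕ → A) := by
  have hX : LinearIndependent R (X ^ · : ℕ → R[X]) := by
    simpa [X_pow_eq_monomial] using (basisMonomials R).linearIndependent
  have hinj : (Polynomial.aeval (R := R) x).toLinearMap.ker = ⊥ := by
    rw [LinearMap.ker_eq_bot]
    exact transcendental_iff_injective.mp hx
  simpa [Function.comp_def] using hX.map' (Polynomial.aeval x).toLinearMap hinj

theorem AddSubgroup.FG.finite_of_linearIndependent {R M ι : Type*} [Ring R] [StrongRankCondition R]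
    [AddCommGroup M] [Module R M] {G : AddSubgroup M} (hG : G.FG) {v : ι → M}
    (hv : LinearIndependent R v) (hvG : ∀ i, v i ∈ G) : Finite ι := by
  obtain ⟨S, rfl⟩ := hG
  have hle : AddSubgroup.closure (S : Set M) ≤ (Submodule.span R (S : Set M)).toAddSubgroup :=
    (AddSubgroup.closure_le _).mpr Submodule.subset_span
  exact hv.finite_of_le_span_finite v S (Set.range_subset_iff.mpr fun i => hle (hvG i))

theorem subgroup_gen_by_neg_powers_not_fg (t a : ℂ) (ht : Transcendental ℚ t) (ha : a ≠ 0) :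
    ¬ (AddSubgroup.closure {x : ℂ | ∃ n : ℕ, x = t ^ (-(2 * n : ℤ)) * a}).FG := by
  intro hfg
  have hu : Transcendental ℚ (t⁻¹ ^ 2) :=
    Transcendental.pow (mt IsAlgebraic.inv_iff.mp ht) two_pos
  have hli := hu.linearIndependent_pow.map' (LinearMap.mulRight ℚ a)
    (LinearMap.ker_eq_bot.mpr (mul_left_injective₀ ha))
  have hmem (n : ℕ) : (t⁻¹ ^ 2) ^ n * a ∈ AddSubgroup.closure
      {x : ℂ | ∃ n : ℕ, x = t ^ (-(2 * n : ℤ)) * a} :=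
    AddSubgroup.subset_closure ⟨n, by rw [zpow_neg, zpow_mul, inv_pow, inv_pow]; norm_cast⟩
  exact (hfg.finite_of_linearIndependent hli hmem).false
end

section
/- The Cremona-type involution τ' of ℙ³ defined by [x₁:x₂:x₃:x₄] ↦ [α₁/x₁ : α₂/x₂ : α₃/x₃ : α₁α₂α₃/x₄] maps the quadric Q : α₁x₂x₃ + α₂x₁x₃ + α₃x₁x₂ + (x₁+x₂+x₃)x₄ = 0 to itself, on the locus where all coordinates are nonzero. -/
def cremonaQuadric {K : Type*} [Field K] (α₁ α₂ α₃ x₁ x₂ x₃ x₄ : K) : K :=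
  α₁ * x₂ * x₃ + α₂ * x₁ * x₃ + α₃ * x₁ * x₂ + (x₁ + x₂ + x₃) * x₄

/- The substitution exchanges the monomials of the form in pairs: `x₂x₃ ↔ x₁x₄`, `x₁x₃ ↔ x₂x₄`,
`x₁x₂ ↔ x₃x₄`, each time with the same factor `α₁α₂α₃ / (x₁x₂x₃x₄)`. -/
theorem cremonaQuadric_inv {K : Type*} [Field K] (α₁ α₂ α₃ : K) {x₁ x₂ x₃ x₄ : K}
    (hx₁ : x₁ ≠ 0) (hx₂ : x₂ ≠ 0) (hx₃ : x₃ ≠ 0) (hx₄ : x₄ ≠ 0) :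
    cremonaQuadric α₁ α₂ α₃ (α₁ / x₁) (α₂ / x₂) (α₃ / x₃) (α₁ * α₂ * α₃ / x₄) =
      α₁ * α₂ * α₃ * cremonaQuadric α₁ α₂ α₃ x₁ x₂ x₃ x₄ / (x₁ * x₂ * x₃ * x₄) := by
  unfold cremonaQuadric
  field_simp
  ring

theorem cremona_preserves_quadric_general (α₁ α₂ α₃ : ℂ)
    (x₁ x₂ x₃ x₄ : ℂ) (hx1 : x₁ ≠ 0) (hx2 : x₂ ≠ 0) (hx3 : x₃ ≠ 0) (hx4 : x₄ ≠ 0)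
    (hQ : α₁ * x₂ * x₃ + α₂ * x₁ * x₃ + α₃ * x₁ * x₂ + (x₁ + x₂ + x₃) * x₄ = 0) :
    α₁ * (α₂ / x₂) * (α₃ / x₃) + α₂ * (α₁ / x₁) * (α₃ / x₃) +
      α₃ * (α₁ / x₁) * (α₂ / x₂) +
      ((α₁ / x₁) + (α₂ / x₂) + (α₃ / x₃)) * (α₁ * α₂ * α₃ / x₄) = 0 := by
  have hQ' : cremonaQuadric α₁ α₂ α₃ x₁ x₂ x₃ x₄ = 0 := hQ
  calc _ = α₁ * α₂ * α₃ * cremonaQuadric α₁ α₂ α₃ x₁ x₂ x₃ x₄ / (x₁ * x₂ * x₃ * x₄) :=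
        cremonaQuadric_inv α₁ α₂ α₃ hx1 hx2 hx3 hx4
    _ = 0 := by rw [hQ', mul_zero, zero_div]

theorem cremona_preserves_quadric (α₁ α₂ α₃ : ℂ)
    (h1 : α₁ ≠ 0) (h2 : α₂ ≠ 0) (h3 : α₃ ≠ 0)
    (x₁ x₂ x₃ x₄ : ℂ) (hx1 : x₁ ≠ 0) (hx2 : x₂ ≠ 0) (hx3 : x₃ ≠ 0) (hx4 : x₄ ≠ 0)
    (hQ : α₁ * x₂ * x₃ + α₂ * x₁ * x₃ + α₃ * x₁ * x₂ + (x₁ + x₂ + x₃) * x₄ = 0) :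
    α₁ * (α₂ / x₂) * (α₃ / x₃) + α₂ * (α₁ / x₁) * (α₃ / x₃) +
      α₃ * (α₁ / x₁) * (α₂ / x₂) +
      ((α₁ / x₁) + (α₂ / x₂) + (α₃ / x₃)) * (α₁ * α₂ * α₃ / x₄) = 0 :=
  cremona_preserves_quadric_general α₁ α₂ α₃ x₁ x₂ x₃ x₄ hx1 hx2 hx3 hx4 hQ
end
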